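/- Let A = (E, ≤, ↗, λ) be an asymmetric event structure, X ⊆ E a combinable set of events, A/X its folding and f : E → E/X the folding morphism. Then R = {(C1, f|_{C1}, f(C1)) | C1 ∈ Conf(A)} is a history preserving bisimulation between A and A/X. -/

import Mathlib

/-- Restriction of a binary relation to a set. -/
def RelRestrict {G : Type*} (r : G → G → Prop) (S : Set G) : G → G → Prop :=
  fun a b => a ∈ S ∧ b ∈ S ∧ r a b

/-- A binary relation is acyclic on a set: there is no cycle lying within the set. -/
def AcyclicOn {G : Type*} (r : G → G → Prop) (S : Set G) : Prop :=
  ∀ x, ¬ Relation.TransGen (RelRestrict r S) x x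

/-- The data of a labelled asymmetric event structure (AES). -/
structure AES (E : Type*) (Λ : Type*) where
  le : E → E → Prop
  ac : E → E → Prop
  lab : E → Λ

namespace AES

variable {E : Type*} {Λ : Type*}

/-- Strict causality. -/
def lt (A : AES E Λ) (e e' : E) : Prop := A.le e e' ∧ e ≠ e'

/-- The set of causes `⌊e⌋`. -/
def causes (A : AES E Λ) (e : E) : Set E := {e' | A.le e' e}

/-- `⌊Y⌋`, the causes of a set of events. -/
def causesSet (A : AES E Λ) (Y : Set E) : Set E := ⋃ y ∈ Y, A.causes y

/-- The axioms making the data an asymmetric event structure. -/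
structure IsAES (A : AES E Λ) : Prop where
  le_refl : ∀ e, A.le e e
  le_trans : ∀ e e' e'', A.le e e' → A.le e' e'' → A.le e e''
  le_antisymm : ∀ e e', A.le e e' → A.le e' e → e = e'
  causes_finite : ∀ e, (A.causes e).Finite
  lt_ac : ∀ e e', A.lt e e' → A.ac e e'
  ac_heredity : ∀ e e' e'', A.ac e e' → A.lt e' e'' → A.ac e e''
  ac_acyclic : ∀ e, AcyclicOn A.ac (A.causes e)
  cyclic_ac : ∀ e e', ¬ AcyclicOn A.ac (A.causes e ∪ A.causes e') → A.ac e e'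

/-- Conflict on sets of events, inductively generated from cycles of asymmetric
conflict and closed under hereditarity along causality. -/
inductive SetConflict (A : AES E Λ) : Set E → Prop
  | cycle (e : E) (l : List E) : List.Chain A.ac e (l ++ [e]) →
      SetConflict A {x | x ∈ e :: l}
  | heredity (Y : Set E) (e e' : E) :
      SetConflict A (Y ∪ {e}) → A.le e e' → SetConflict A (Y ∪ {e'})

/-- Binary conflict `e # e'`. -/
def Conflict (A : AES E Λ) (e e' : E) : Prop := A.SetConflict {e, e'}

/-- A set of events is consistent if it contains no two events in conflict. -/
def ConsistentSet (A : AES E Λ) (Y : Set E) : Prop :=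
  ∀ e ∈ Y, ∀ e' ∈ Y, ¬ A.Conflict e e'

/-- Immediate causality `e' <_μ e`. -/
def ltMu (A : AES E Λ) (e' e : E) : Prop :=
  A.lt e' e ∧ ¬ ∃ e'', A.lt e' e'' ∧ A.lt e'' e

/-- Direct asymmetric conflict `e ↗_μ e''`. -/
def acMu (A : AES E Λ) (e e'' : E) : Prop :=
  A.ac e e'' ∧ ¬ ∃ e', A.ac e e' ∧ A.lt e' e''

/-- Direct binary conflict `e #_μ e'`. -/
def confMu (A : AES E Λ) (e e' : E) : Prop := A.acMu e e' ∧ A.acMu e' e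

/-- Configurations: finite, causally closed and free of asymmetric-conflict cycles. -/
def Config (A : AES E Λ) (C : Set E) : Prop :=
  C.Finite ∧ (∀ e ∈ C, A.causes e ⊆ C) ∧ AcyclicOn A.ac C

/-- Similar sets of events. -/
def Similar (A : AES E Λ) (X : Set E) : Prop :=
  ∀ e ∈ X, ∀ e' ∈ X,
    A.lab e = A.lab e' ∧ (e ≠ e' → A.Conflict e e') ∧
    ∀ e'', e'' ∉ X →
      (A.ac e e'' → (A.ac e' e'' ∨ A.ac e'' e)) ∧
      (A.acMu e'' e → A.ac e'' e')

/-- The strict causes `S(X)`. -/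
def strictCauses (A : AES E Λ) (X : Set E) : Set E := {e' | ∀ e ∈ X, A.lt e' e}

/-- The weak predecessors `W(X)`. -/
def weakPred (A : AES E Λ) (X : Set E) : Set E :=
  {e'' | ∃ e ∈ X, ∃ e' ∈ X, A.ac e'' e ∧ ¬ A.ac e' e''} \ (A.strictCauses X ∪ X)

/-- The history `C⟦e⟧` of `e` in a configuration `C`. -/
def history (A : AES E Λ) (C : Set E) (e : E) : Set E :=
  {e' | e' ∈ C ∧ Relation.ReflTransGen (RelRestrict A.ac C) e' e}

/-- The set of possible histories of `e`. -/
def Hist (A : AES E Λ) (e : E) : Set (Set E) :=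
  {h | ∃ C, A.Config C ∧ e ∈ C ∧ h = A.history C e}

/-- Combinable sets of events. -/
def Combinable (A : AES E Λ) (X : Set E) : Prop :=
  A.Similar X ∧
  ∀ Y, Y ⊆ A.weakPred X → A.ConsistentSet Y →
    ∃ e ∈ X, (∀ e' ∈ Y, ¬ A.ac e e') ∧
      ∃ h ∈ A.Hist e, h \ {e} ⊆ A.strictCauses X ∪ A.causesSet Y

/-- The carrier of the folded structure: `(E \ X) ∪ {e_X}`, where the fresh
event `e_X` is encoded as `none`. -/
def foldCarrier (X : Set E) : Set (Option E) :=
  {x | x = none ∨ ∃ e, e ∉ X ∧ x = some e}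

/-- Causality of the folded structure. -/
def foldLe (A : AES E Λ) (X : Set E) : Option E → Option E → Prop
  | some e, some e' => e ∉ X ∧ e' ∉ X ∧ A.le e e'
  | some e, none => e ∈ A.strictCauses X
  | none, some e => e ∉ X ∧ ∃ e' ∈ X, A.lt e' e
  | none, none => True

/-- Asymmetric conflict of the folded structure. -/
def foldAc (A : AES E Λ) (X : Set E) : Option E → Option E → Prop
  | some e, some e' => e ∉ X ∧ e' ∉ X ∧ A.ac e e'
  | some e', none => e' ∉ X ∧ ∀ e ∈ X, A.ac e' e
  | none, some e' => e' ∉ X ∧ ∀ e ∈ X, A.ac e e'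
  | none, none => False

open Classical in
/-- Labelling of the folded structure. -/
noncomputable def foldLab [Inhabited Λ] (A : AES E Λ) (X : Set E) : Option E → Λ
  | some e => A.lab e
  | none => if h : X.Nonempty then A.lab h.some else default

open Classical in
/-- The folding morphism `f : E → E/X`. -/
noncomputable def foldMap (X : Set E) : E → Option E :=
  fun e => if e ∈ X then none else some e

end AES

/-- An event structure with asymmetric conflict, presented with an explicit
carrier set of events (used for the folded structure, whose events form a
subset of `Option E`). -/
structure ES (G : Type*) (Λ : Type*) where
  carrier : Set G
  le : G → G → Prop
  ac : G → G → Prop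
  lab : G → Λ

namespace ES

variable {G : Type*} {Λ : Type*}

/-- Configurations: finite, causally closed subsets of the carrier on which
asymmetric conflict is acyclic. -/
def Config (D : ES G Λ) (C : Set G) : Prop :=
  C ⊆ D.carrier ∧ C.Finite ∧ (∀ x ∈ C, ∀ y ∈ D.carrier, D.le y x → y ∈ C) ∧
  AcyclicOn D.ac C

/-- The extension order on configurations: `C₁ ⊑ C₂` iff `C₁ ⊆ C₂` and no event
of `C₂ \ C₁` is in asymmetric conflict with an event of `C₁`. -/
def Extends (D : ES G Λ) (C₁ C₂ : Set G) : Prop :=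
  C₁ ⊆ C₂ ∧ ∀ e ∈ C₁, ∀ e' ∈ C₂, e' ∉ C₁ → ¬ D.ac e' e

end ES

/-- `g` is a label-preserving isomorphism between the configuration `C₁` of
`D₁`, ordered by `(↗₁|_{C₁})*`, and the configuration `C₂` of `D₂`, ordered by
`(↗₂|_{C₂})*`. -/
def IsPosetIso {G₁ G₂ Λ : Type*} (D₁ : ES G₁ Λ) (D₂ : ES G₂ Λ)
    (C₁ : Set G₁) (C₂ : Set G₂) (g : G₁ → G₂) : Prop :=
  Set.InjOn g C₁ ∧ g '' C₁ = C₂ ∧ (∀ e ∈ C₁, D₂.lab (g e) = D₁.lab e) ∧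
  ∀ e ∈ C₁, ∀ e' ∈ C₁,
    (Relation.ReflTransGen (RelRestrict D₁.ac C₁) e e' ↔
      Relation.ReflTransGen (RelRestrict D₂.ac C₂) (g e) (g e'))

/-- History preserving bisimulations between (asymmetric) event structures:
sets of triples `(C₁, g, C₂)` of configurations related by a label-preserving
order isomorphism `g`, containing the empty triple, such that every one-event
extension on either side can be matched on the other side by an equally
labelled event, extending the isomorphism. -/
def IsHpBisim {G₁ G₂ Λ : Type*} (D₁ : ES G₁ Λ) (D₂ : ES G₂ Λ)
    (R : Set (Set G₁ × (G₁ → G₂) × Set G₂)) : Prop :=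
  (∀ t ∈ R, D₁.Config t.1 ∧ D₂.Config t.2.2 ∧ IsPosetIso D₁ D₂ t.1 t.2.2 t.2.1) ∧
  (∃ g, ((∅ : Set G₁), g, (∅ : Set G₂)) ∈ R) ∧
  ∀ C₁ g C₂, (C₁, g, C₂) ∈ R →
    (∀ e₁ ∈ D₁.carrier, D₁.Extends C₁ (C₁ ∪ {e₁}) → D₁.Config (C₁ ∪ {e₁}) →
      ∃ e₂ ∈ D₂.carrier, D₂.lab e₂ = D₁.lab e₁ ∧
        ∃ g', (∀ x ∈ C₁, g' x = g x) ∧ (C₁ ∪ {e₁}, g', C₂ ∪ {e₂}) ∈ R) ∧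
    (∀ e₂ ∈ D₂.carrier, D₂.Extends C₂ (C₂ ∪ {e₂}) → D₂.Config (C₂ ∪ {e₂}) →
      ∃ e₁ ∈ D₁.carrier, D₁.lab e₁ = D₂.lab e₂ ∧
        ∃ g', (∀ x ∈ C₁, g' x = g x) ∧ (C₁ ∪ {e₁}, g', C₂ ∪ {e₂}) ∈ R)

namespace AES

variable {E : Type*} {Λ : Type*}

/-- An AES viewed as a carrier-based event structure (carrier: all events). -/
def toES (A : AES E Λ) : ES E Λ := ⟨Set.univ, A.le, A.ac, A.lab⟩

/-- The folded structure `A/X` as a carrier-based event structure. -/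
noncomputable def foldES [Inhabited Λ] (A : AES E Λ) (X : Set E) : ES (Option E) Λ :=
  ⟨foldCarrier X, A.foldLe X, A.foldAc X, A.foldLab X⟩

end AES

/-!
Distinct events of a similar set are in conflict, so a configuration `C` of `A` contains at
most one event of `X`; hence the folding morphism `f` is injective on `C`, and `f(C)` is a
configuration of `A/X`. Asymmetric conflicts inside `C` survive in `f(C)`: a conflict `z ↗ w`
with `z ∉ X` and `w ∈ X` is replaced by a path to `e_X`, obtained by descending along the
causes of `w` to a direct asymmetric conflict `z ↗_μ w'`; if `w' ∈ X`, similarity gives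
`z ↗ e` for every `e ∈ X`, i.e. `z ↗ e_X`. Conversely, the paths of `f(C)` map back to paths
in `C` by sending `e_X` to the unique event of `C ∩ X`. For the backward simulation, an
extension of `f(C)` by an old event `b` is an extension of `C` by `b`, and an extension by
`e_X` is matched by the event `e ∈ X` that combinability provides for the weak predecessors
of `X` lying in `C`.
-/

open Relation

theorem List.IsChain.transGen_cons_append_singleton {α : Type*} {r : α → α → Prop} {a b : α}
    {l : List α} (h : List.IsChain r (a :: (l ++ [b]))) : TransGen r a b := by
  induction l generalizing a with
  | nil => exact .single (List.rel_of_isChain_cons_cons h)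
  | cons c l ih =>
    rw [List.cons_append, List.isChain_cons_cons] at h
    exact .head h.1 (ih h.2)

section AcyclicOn

variable {α : Type*} {r : α → α → Prop} {S : Set α}

theorem AcyclicOn.wellFounded_swap (hfin : S.Finite) (h : AcyclicOn r S) :
    WellFounded (Function.swap (RelRestrict r S)) := by
  have : IsStrictOrder α (TransGen (Function.swap (RelRestrict r S))) :=
    { irrefl := fun x hx => h x (transGen_swap.mp hx)
      trans := fun _ _ _ => TransGen.trans }
  have hwf := hfin.wellFoundedOn (r := TransGen (Function.swap (RelRestrict r S)))
  rw [Set.wellFoundedOn_iff] at hwf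
  exact Subrelation.wf (fun hab => ⟨.single hab, hab.2.1, hab.1⟩) hwf

theorem AcyclicOn.union_singleton {e : α} (h : AcyclicOn r S)
    (he : ∀ v ∈ S ∪ {e}, ¬ r e v) : AcyclicOn r (S ∪ {e}) := by
  have source_ne : ∀ u v, RelRestrict r (S ∪ {e}) u v → u ≠ e := by
    rintro u v ⟨-, hv, huv⟩ rfl
    exact he v hv huv
  have mem_of_ne : ∀ u ∈ S ∪ {e}, u ≠ e → u ∈ S := fun u hu hne => hu.resolve_right hne
  have restrict : ∀ a b, TransGen (RelRestrict r (S ∪ {e})) a b → b ≠ e →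
      TransGen (RelRestrict r S) a b := by
    intro a b hab
    induction hab with
    | single hab =>
      exact fun hb =>
        .single ⟨mem_of_ne _ hab.1 (source_ne _ _ hab), mem_of_ne _ hab.2.1 hb, hab.2.2⟩
    | tail _ hbc ih =>
      exact fun hc => (ih (source_ne _ _ hbc)).tail
        ⟨mem_of_ne _ hbc.1 (source_ne _ _ hbc), mem_of_ne _ hbc.2.1 hc, hbc.2.2⟩
  intro x hx
  obtain ⟨y, hxy, -⟩ := TransGen.head'_iff.mp hx
  exact h x (restrict x x hx (source_ne _ _ hxy))

end AcyclicOn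

namespace AES

variable {E Λ : Type*} {A : AES E Λ} {X C : Set E}

theorem IsAES.not_ac_self (hA : A.IsAES) (e : E) : ¬ A.ac e e := fun h =>
  hA.ac_acyclic e e (.single ⟨hA.le_refl e, hA.le_refl e, h⟩)

theorem IsAES.wellFounded_lt (hA : A.IsAES) : WellFounded A.lt := by
  refine Subrelation.wf (fun {u w} h => ?_) (measure fun e => (A.causes e).ncard).wf
  refine Set.ncard_lt_ncard ⟨fun z hz => hA.le_trans _ _ _ hz h.1, fun hwu => ?_⟩
    (hA.causes_finite w)
  exact h.2 (hA.le_antisymm _ _ h.1 (hwu (hA.le_refl w)))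

theorem IsAES.exists_le_acMu (hA : A.IsAES) {z w : E} (h : A.ac z w) :
    ∃ w', A.le w' w ∧ A.acMu z w' := by
  obtain ⟨w', ⟨hw'w, hzw'⟩, hmin⟩ :=
    hA.wellFounded_lt.has_min {v | A.le v w ∧ A.ac z v} ⟨w, hA.le_refl w, h⟩
  exact ⟨w', hw'w, hzw', fun ⟨v, hzv, hvw'⟩ =>
    hmin v ⟨hA.le_trans _ _ _ hvw'.1 hw'w, hzv⟩ hvw'⟩

theorem SetConflict.not_acyclicOn {Y D : Set E} (hY : A.SetConflict Y)
    (hD : ∀ u ∈ D, ∀ z, A.le z u → z ∈ D) (hYD : Y ⊆ D) : ¬ AcyclicOn A.ac D := by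
  induction hY with
  | cycle e l hchain =>
    refine fun hacy => hacy e (List.IsChain.transGen_cons_append_singleton (l := l) ?_)
    refine List.IsChain.imp_of_mem_imp (fun a b ha hb hab => ⟨hYD ?_, hYD ?_, hab⟩) hchain
    all_goals simp only [List.mem_cons, List.mem_append] at ha hb ⊢; tauto
  | heredity Y e e' _ hle ih =>
    exact ih (Set.union_subset (Set.subset_union_left.trans hYD)
      (Set.singleton_subset_iff.mpr (hD e' (hYD (.inr rfl)) e hle)))

theorem Config.consistentSet (hC : A.Config C) : A.ConsistentSet C :=
  fun _ he _ he' hconf => hconf.not_acyclicOn (fun u hu _ hz => hC.2.1 u hu hz)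
    (Set.insert_subset he (Set.singleton_subset_iff.mpr he')) hC.2.2

theorem config_empty : A.Config ∅ := by
  refine ⟨Set.finite_empty, fun _ h => h.elim, fun x hx => ?_⟩
  obtain ⟨_, hxy, -⟩ := TransGen.head'_iff.mp hx
  exact hxy.1

theorem config_toES_iff : A.toES.Config C ↔ A.Config C :=
  ⟨fun h => ⟨h.2.1, fun x hx z hz => h.2.2.1 x hx z trivial hz, h.2.2.2⟩,
    fun h => ⟨Set.subset_univ C, h.1, fun x hx _ _ hyx => h.2.1 x hx hyx, h.2.2⟩⟩

theorem Similar.ac_of_ne (hA : A.IsAES) (hS : A.Similar X) {e e' : E} (he : e ∈ X)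
    (he' : e' ∈ X) (hne : e ≠ e') : A.ac e e' :=
  hA.cyclic_ac e e' <| ((hS e he e' he').2.1 hne).not_acyclicOn
    (fun _ hu _ hz => hu.imp (hA.le_trans _ _ _ hz) (hA.le_trans _ _ _ hz))
    (Set.insert_subset (.inl (hA.le_refl e)) (Set.singleton_subset_iff.mpr (.inr (hA.le_refl e'))))

theorem Similar.ac_of_le (hA : A.IsAES) (hS : A.Similar X) {z c b : E} (hz : z ∈ X)
    (hc : c ∈ X) (hne : z ≠ c) (hzb : A.le z b) : A.ac b c :=
  hA.cyclic_ac b c fun hacy => hacy z <|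
    .head ⟨.inl hzb, .inr (hA.le_refl c), hS.ac_of_ne hA hz hc hne⟩
      (.single ⟨.inr (hA.le_refl c), .inl hzb, hS.ac_of_ne hA hc hz hne.symm⟩)

theorem Similar.eq_of_mem_config (hS : A.Similar X) (hC : A.Config C) {e e' : E} (he : e ∈ C)
    (heX : e ∈ X) (he' : e' ∈ C) (he'X : e' ∈ X) : e = e' :=
  by_contra fun hne => hC.consistentSet e he e' he' ((hS e heX e' he'X).2.1 hne)

theorem Similar.foldAc_some_none (hS : A.Similar X) {z w : E} (hzX : z ∉ X) (hwX : w ∈ X)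
    (hzw : A.acMu z w) : A.foldAc X (some z) none :=
  ⟨hzX, fun e he => ((hS w hwX e he).2.2 z hzX).2 hzw⟩

theorem foldMap_of_mem {e : E} (h : e ∈ X) : foldMap X e = none := if_pos h

theorem foldMap_of_notMem {e : E} (h : e ∉ X) : foldMap X e = some e := if_neg h

theorem foldMap_mem_foldCarrier (e : E) : foldMap X e ∈ foldCarrier X := by
  by_cases h : e ∈ X
  · exact .inl (foldMap_of_mem h)
  · exact .inr ⟨e, h, foldMap_of_notMem h⟩

theorem some_mem_image_foldMap {u : E} : some u ∈ foldMap X '' C ↔ u ∈ C ∧ u ∉ X := by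
  simp only [Set.mem_image, foldMap]
  grind

theorem none_mem_image_foldMap : none ∈ foldMap X '' C ↔ ∃ c ∈ C, c ∈ X := by
  simp only [Set.mem_image, foldMap]
  grind

theorem Similar.foldLab_foldMap [Inhabited Λ] (hS : A.Similar X) (e : E) :
    A.foldLab X (foldMap X e) = A.lab e := by
  by_cases he : e ∈ X
  · have hne : X.Nonempty := ⟨e, he⟩
    rw [foldMap_of_mem he, foldLab, dif_pos hne]
    exact (hS _ hne.some_mem e he).1
  · rw [foldMap_of_notMem he, foldLab]

/-- Descent along direct asymmetric conflicts; it terminates because `↗` is acyclic on `C`. -/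
theorem Config.transGen_foldAc_some_none (hA : A.IsAES) (hS : A.Similar X) (hC : A.Config C)
    {w : E} (hwC : w ∈ C) (hwX : w ∈ X) :
    ∀ z ∈ C, z ∉ X → A.ac z w →
      TransGen (RelRestrict (A.foldAc X) (foldMap X '' C)) (some z) none := by
  intro z
  induction z using (hC.2.2.wellFounded_swap hC.1).induction with
  | h z ih =>
  intro hzC hzX hzw
  have hz := some_mem_image_foldMap.mpr ⟨hzC, hzX⟩
  obtain ⟨v, hvw, hzv⟩ := hA.exists_le_acMu hzw
  by_cases hvX : v ∈ X
  · exact .single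
      ⟨hz, none_mem_image_foldMap.mpr ⟨w, hwC, hwX⟩, hS.foldAc_some_none hzX hvX hzv⟩
  · have hvC : v ∈ C := hC.2.1 w hwC hvw
    have hvw' : A.lt v w := ⟨hvw, fun h => hvX (h ▸ hwX)⟩
    exact .head ⟨hz, some_mem_image_foldMap.mpr ⟨hvC, hvX⟩, hzX, hvX, hzv.1⟩
      (ih v ⟨hzC, hvC, hzv.1⟩ hvC hvX (hA.lt_ac _ _ hvw'))

theorem Config.reflTransGen_foldAc_of_relRestrict (hA : A.IsAES) (hS : A.Similar X)
    (hC : A.Config C) {a b : E} (h : RelRestrict A.ac C a b) :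
    ReflTransGen (RelRestrict (A.foldAc X) (foldMap X '' C)) (foldMap X a) (foldMap X b) := by
  obtain ⟨ha, hb, hab⟩ := h
  by_cases haX : a ∈ X <;> by_cases hbX : b ∈ X
  · rw [hS.eq_of_mem_config hC ha haX hb hbX]
  · rw [foldMap_of_mem haX, foldMap_of_notMem hbX]
    refine .single ⟨none_mem_image_foldMap.mpr ⟨a, ha, haX⟩,
      some_mem_image_foldMap.mpr ⟨hb, hbX⟩, hbX, fun e he => ?_⟩
    exact ((hS a haX e he).2.2 b hbX).1 hab |>.resolve_right fun hba =>
      hC.2.2 a (.head ⟨ha, hb, hab⟩ (.single ⟨hb, ha, hba⟩))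
  · rw [foldMap_of_notMem haX, foldMap_of_mem hbX]
    exact (hC.transGen_foldAc_some_none hA hS hb hbX a ha haX hab).to_reflTransGen
  · rw [foldMap_of_notMem haX, foldMap_of_notMem hbX]
    exact .single ⟨some_mem_image_foldMap.mpr ⟨ha, haX⟩,
      some_mem_image_foldMap.mpr ⟨hb, hbX⟩, haX, hbX, hab⟩

theorem relRestrict_getD_of_foldAc {c : E} (hc : none ∈ foldMap X '' C → c ∈ C ∧ c ∈ X)
    {x y : Option E} (h : RelRestrict (A.foldAc X) (foldMap X '' C) x y) :
    RelRestrict A.ac C (x.getD c) (y.getD c) := by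
  obtain ⟨hx, hy, hxy⟩ := h
  match x, y with
  | some _, some _ =>
    exact ⟨(some_mem_image_foldMap.mp hx).1, (some_mem_image_foldMap.mp hy).1, hxy.2.2⟩
  | some _, none => exact ⟨(some_mem_image_foldMap.mp hx).1, (hc hy).1, hxy.2 c (hc hy).2⟩
  | none, some _ => exact ⟨(hc hx).1, (some_mem_image_foldMap.mp hy).1, hxy.2 c (hc hx).2⟩
  | none, none => exact hxy.elim

theorem Similar.exists_leftInvOn_foldMap (hS : A.Similar X) (hC : A.Config C) (a : E) :
    ∃ c, (none ∈ foldMap X '' C → c ∈ C ∧ c ∈ X) ∧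
      Set.LeftInvOn (fun o => o.getD c) (foldMap X) C := by
  by_cases hn : none ∈ foldMap X '' C
  · obtain ⟨c, hcC, hcX⟩ := none_mem_image_foldMap.mp hn
    refine ⟨c, fun _ => ⟨hcC, hcX⟩, fun b hb => ?_⟩
    by_cases hbX : b ∈ X
    · simp [foldMap_of_mem hbX, hS.eq_of_mem_config hC hcC hcX hb hbX]
    · simp [foldMap_of_notMem hbX]
  · refine ⟨a, fun h => absurd h hn, fun b hb => ?_⟩
    have hbX : b ∉ X := fun hbX => hn (none_mem_image_foldMap.mpr ⟨b, hb, hbX⟩)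
    simp [foldMap_of_notMem hbX]

theorem Similar.config_image_foldMap [Inhabited Λ] (hS : A.Similar X) (hC : A.Config C) :
    (A.foldES X).Config (foldMap X '' C) := by
  refine ⟨Set.image_subset_iff.mpr fun e _ => foldMap_mem_foldCarrier e, hC.1.image _, ?_, ?_⟩
  · intro x hx y _ hyx
    match y, x with
    | some _, some a =>
      exact some_mem_image_foldMap.mpr
        ⟨hC.2.1 a (some_mem_image_foldMap.mp hx).1 hyx.2.2, hyx.1⟩
    | none, some a =>
      obtain ⟨-, e, heX, hea⟩ := hyx
      exact none_mem_image_foldMap.mpr ⟨e, hC.2.1 a (some_mem_image_foldMap.mp hx).1 hea.1, heX⟩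
    | some b, none =>
      obtain ⟨c, hcC, hcX⟩ := none_mem_image_foldMap.mp hx
      exact some_mem_image_foldMap.mpr
        ⟨hC.2.1 c hcC (hyx c hcX).1, fun hbX => (hyx b hbX).2 rfl⟩
    | none, none => exact hx
  · intro x hx
    obtain ⟨y, hxy, -⟩ := TransGen.head'_iff.mp hx
    obtain ⟨a, ha, -⟩ := hxy.1
    obtain ⟨c, hc, -⟩ := hS.exists_leftInvOn_foldMap hC a
    exact hC.2.2 _ (TransGen.lift _ (fun _ _ h => relRestrict_getD_of_foldAc hc h) _ _ hx)

theorem Similar.isPosetIso_foldMap [Inhabited Λ] (hA : A.IsAES) (hS : A.Similar X)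
    (hC : A.Config C) : IsPosetIso A.toES (A.foldES X) C (foldMap X '' C) (foldMap X) := by
  refine ⟨fun a ha b hb hab => ?_, rfl, fun e _ => hS.foldLab_foldMap e,
    fun a ha b hb => ⟨fun h => ?_, fun h => ?_⟩⟩
  · obtain ⟨c, -, hinv⟩ := hS.exists_leftInvOn_foldMap hC a
    exact hinv.injOn ha hb hab
  · exact ReflTransGen.lift' _ (fun _ _ h => hC.reflTransGen_foldAc_of_relRestrict hA hS h) _ _ h
  · obtain ⟨c, hc, hinv⟩ := hS.exists_leftInvOn_foldMap hC a
    have hlift : ReflTransGen (RelRestrict A.ac C) ((foldMap X a).getD c) ((foldMap X b).getD c) :=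
      ReflTransGen.lift (fun o => o.getD c) (fun _ _ h => relRestrict_getD_of_foldAc hc h) _ _ h
    rwa [show (foldMap X a).getD c = a from hinv ha, show (foldMap X b).getD c = b from hinv hb]
      at hlift

theorem Similar.config_union_of_extends_some [Inhabited Λ] (hA : A.IsAES) (hS : A.Similar X)
    (hC : A.Config C) {b : E} (hbX : b ∉ X) (hbC : b ∉ C)
    (hext : (A.foldES X).Extends (foldMap X '' C) (foldMap X '' C ∪ {some b}))
    (hcfg : (A.foldES X).Config (foldMap X '' C ∪ {some b})) : A.Config (C ∪ {b}) := by
  have hb : some b ∉ foldMap X '' C := fun h => hbC (some_mem_image_foldMap.mp h).1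
  have no_foldAc : ∀ v ∈ foldMap X '' C, ¬ A.foldAc X (some b) v :=
    fun v hv => hext.2 v hv (some b) (.inr rfl) hb
  have no_ac : ∀ v ∈ C, ¬ A.ac b v := by
    intro v hv hbv
    obtain ⟨v', hv'v, hbv'⟩ := hA.exists_le_acMu hbv
    have hv'C := hC.2.1 v hv hv'v
    by_cases hv'X : v' ∈ X
    · exact no_foldAc none (none_mem_image_foldMap.mpr ⟨v', hv'C, hv'X⟩)
        (hS.foldAc_some_none hbX hv'X hbv')
    · exact no_foldAc (some v') (some_mem_image_foldMap.mpr ⟨hv'C, hv'X⟩)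
        ⟨hbX, hv'X, hbv'.1⟩
  refine ⟨hC.1.union (Set.finite_singleton b), ?_, hC.2.2.union_singleton ?_⟩
  · rintro x (hx | hx) z hz
    · exact .inl (hC.2.1 x hx hz)
    obtain rfl : x = b := hx
    by_cases hzx : z = x
    · exact .inr hzx
    by_cases hzX : z ∈ X
    · have hnone : none ∈ foldMap X '' C ∪ {some x} :=
        hcfg.2.2.1 (some x) (.inr rfl) none (.inl rfl) ⟨hbX, z, hzX, hz, hzx⟩
      obtain ⟨c, hcC, hcX⟩ := none_mem_image_foldMap.mp (hnone.resolve_right (by simp))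
      by_contra hzC
      exact no_ac c hcC (hS.ac_of_le hA hzX hcX (fun h => hzC (.inl (h ▸ hcC))) hz)
    · have hsome : some z ∈ foldMap X '' C ∪ {some x} :=
        hcfg.2.2.1 (some x) (.inr rfl) (some z) (.inr ⟨z, hzX, rfl⟩) ⟨hzX, hbX, hz⟩
      exact .inl (some_mem_image_foldMap.mp (hsome.resolve_right (by simpa using hzx))).1
  · rintro v (hv | hv)
    · exact no_ac v hv
    · obtain rfl : v = b := hv
      exact hA.not_ac_self v

theorem Combinable.exists_config_union_of_extends_none [Inhabited Λ] (hA : A.IsAES)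
    (hX : A.Combinable X) (hC : A.Config C) (hnC : none ∉ foldMap X '' C)
    (hext : (A.foldES X).Extends (foldMap X '' C) (foldMap X '' C ∪ {none}))
    (hcfg : (A.foldES X).Config (foldMap X '' C ∪ {none})) :
    ∃ e ∈ X, A.Config (C ∪ {e}) := by
  have hCX : ∀ v ∈ C, v ∉ X :=
    fun v hv hvX => hnC (none_mem_image_foldMap.mpr ⟨v, hv, hvX⟩)
  have hSC : A.strictCauses X ⊆ C := fun s hs => by
    have hsome : some s ∈ foldMap X '' C ∪ {none} := hcfg.2.2.1 none (.inr rfl) (some s)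
      (.inr ⟨s, fun hsX => (hs s hsX).2 rfl, rfl⟩) hs
    exact (some_mem_image_foldMap.mp (hsome.resolve_right (by simp))).1
  have not_above : ∀ v ∈ C, ∃ e₀ ∈ X, ¬ A.ac e₀ v := fun v hv => by
    by_contra! h
    exact hext.2 (some v) (some_mem_image_foldMap.mpr ⟨hv, hCX v hv⟩) none (.inr rfl) hnC
      ⟨hCX v hv, h⟩
  obtain ⟨e, heX, hnot, _, ⟨Ch, hCh, heCh, rfl⟩, hhist⟩ :=
    hX.2 (A.weakPred X ∩ C) Set.inter_subset_left fun a ha a' ha' =>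
      hC.consistentSet a ha.2 a' ha'.2
  refine ⟨e, heX, hC.1.union (Set.finite_singleton e), ?_, hC.2.2.union_singleton ?_⟩
  · rintro x (hx | hx) z hz
    · exact .inl (hC.2.1 x hx hz)
    obtain rfl : x = e := hx
    by_cases hzx : z = x
    · exact .inr hzx
    have hzCh := hCh.2.1 x heCh hz
    have hzh : z ∈ A.history Ch x :=
      ⟨hzCh, .single ⟨hzCh, heCh, hA.lt_ac z x ⟨hz, hzx⟩⟩⟩
    rcases hhist ⟨hzh, hzx⟩ with hzS | hzY
    · exact .inl (hSC hzS)
    · obtain ⟨y, hy, hzy⟩ := Set.mem_iUnion₂.mp hzY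
      exact .inl (hC.2.1 y hy.2 hzy)
  · rintro v (hv | hv) hev
    · -- similarity turns `e ↗ v` into `v ↗ e`, making `v` a weak predecessor of `X`
      obtain ⟨e₀, he₀X, hne₀⟩ := not_above v hv
      have hve : A.ac v e :=
        (((hX.1 e heX e₀ he₀X).2.2 v (hCX v hv)).1 hev).resolve_left hne₀
      by_cases hvS : v ∈ A.strictCauses X
      · exact hA.not_ac_self e (hA.ac_heredity e v e hev (hvS e heX))
      · have hvW : v ∈ A.weakPred X :=
          ⟨⟨e, heX, e₀, he₀X, hve, hne₀⟩, fun h => h.elim hvS (hCX v hv)⟩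
        exact hnot v ⟨hvW, hv⟩ hev
    · obtain rfl : v = e := hv
      exact hA.not_ac_self v hev

theorem Combinable.exists_foldMap_eq_config_union [Inhabited Λ] (hA : A.IsAES)
    (hX : A.Combinable X) (hC : A.Config C) {x : Option E} (hx : x ∈ foldCarrier X)
    (hext : (A.foldES X).Extends (foldMap X '' C) (foldMap X '' C ∪ {x}))
    (hcfg : (A.foldES X).Config (foldMap X '' C ∪ {x})) :
    ∃ e, foldMap X e = x ∧ A.Config (C ∪ {e}) := by
  by_cases hxC : x ∈ foldMap X '' C
  · obtain ⟨a, ha, rfl⟩ := hxC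
    exact ⟨a, rfl, by rwa [Set.union_singleton, Set.insert_eq_of_mem ha]⟩
  rcases hx with rfl | ⟨b, hbX, rfl⟩
  · obtain ⟨e, heX, hcfg'⟩ := hX.exists_config_union_of_extends_none hA hC hxC hext hcfg
    exact ⟨e, foldMap_of_mem heX, hcfg'⟩
  · exact ⟨b, foldMap_of_notMem hbX, hX.1.config_union_of_extends_some hA hC hbX
      (fun hbC => hxC (some_mem_image_foldMap.mpr ⟨hbC, hbX⟩)) hext hcfg⟩

end AES

open AES in
/-- `R = {(C₁, f|_{C₁}, f(C₁)) | C₁ ∈ Conf(A)}` is a history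
preserving bisimulation between `A` and its folding `A/X`. -/
theorem aes_folding_hp_bisimulation
    {E Λ : Type*} [Inhabited Λ] (A : AES E Λ) (hA : A.IsAES)
    (X : Set E) (hX : A.Combinable X) :
    IsHpBisim A.toES (A.foldES X)
      {t | ∃ C₁ : Set E, A.Config C₁ ∧ t = (C₁, foldMap X, foldMap X '' C₁)} := by
  refine ⟨?_, ⟨foldMap X, ∅, config_empty, by simp⟩, ?_⟩
  · rintro _ ⟨C, hC, rfl⟩
    exact ⟨config_toES_iff.mpr hC, hX.1.config_image_foldMap hC, hX.1.isPosetIso_foldMap hA hC⟩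
  rintro C₁ g C₂ ⟨_, hC, h⟩
  simp only [Prod.mk.injEq] at h
  obtain ⟨rfl, rfl, rfl⟩ := h
  have image_union (e : E) : foldMap X '' (C₁ ∪ {e}) = foldMap X '' C₁ ∪ {foldMap X e} := by
    rw [Set.image_union, Set.image_singleton]
  refine ⟨fun e₁ _ _ hcfg => ?_, fun e₂ he₂ hext hcfg => ?_⟩
  · exact ⟨foldMap X e₁, foldMap_mem_foldCarrier e₁, hX.1.foldLab_foldMap e₁, foldMap X,
      fun _ _ => rfl, C₁ ∪ {e₁}, config_toES_iff.mp hcfg, by rw [image_union]⟩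
  · obtain ⟨e₁, rfl, hcfg'⟩ := hX.exists_foldMap_eq_config_union hA hC he₂ hext hcfg
    exact ⟨e₁, trivial, (hX.1.foldLab_foldMap e₁).symm, foldMap X, fun _ _ => rfl,
      C₁ ∪ {e₁}, hcfg', by rw [image_union]⟩
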